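/- Let n be a positive integer, let g₁, g₂, v ∈ F₂[x] have degree less than n with g₁·h₁ = xⁿ−1 and g₂·h₂ = xⁿ−1 for some h₁, h₂ ∈ F₂[x], gcd(g₁, g₂) = 1, gcd(v−1, xⁿ−1) = 1, g₂ | x^{deg h₁}·h₁(1/x), and v̄ = v (where v̄ denotes the polynomial v₀ + v_{n−1}x + v_{n−2}x² + ⋯ + v₁x^{n−1}). Then the two-generator quasi-cyclic code C(g₁,g₂,v) ⊆ F₂^{2n} satisfies C(g₁,g₂,v)^⊥ₛ ⊆ C(g₁,g₂,v) and has F₂-dimension 2n − deg(g₁) − deg(g₂); in particular its dimension is at least n. -/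

import Mathlib

open Polynomial

/-- The coefficient-vector map `[g] = (g₀, …, g_{n−1}) ∈ F₂ⁿ` (as a linear map). -/
noncomputable def vecL (n : ℕ) : Polynomial (ZMod 2) →ₗ[ZMod 2] (Fin n → ZMod 2) :=
  LinearMap.pi fun i => Polynomial.lcoeff (ZMod 2) (i : ℕ)

/-- The linear map `(a, b) ↦ ([a·v·g₁ + b·g₂ mod xⁿ−1], [a·g₁ + b·v·g₂ mod xⁿ−1])`. -/
noncomputable def cwL (n : ℕ) (g₁ g₂ v : Polynomial (ZMod 2)) :
    (Polynomial (ZMod 2) × Polynomial (ZMod 2)) →ₗ[ZMod 2]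
      ((Fin n → ZMod 2) × (Fin n → ZMod 2)) :=
  LinearMap.prod
    ((vecL n).comp ((Polynomial.modByMonicHom (X ^ n - 1)).comp
      ((LinearMap.mulRight (ZMod 2) (v * g₁)).comp (LinearMap.fst (ZMod 2) _ _) +
       (LinearMap.mulRight (ZMod 2) g₂).comp (LinearMap.snd (ZMod 2) _ _))))
    ((vecL n).comp ((Polynomial.modByMonicHom (X ^ n - 1)).comp
      ((LinearMap.mulRight (ZMod 2) g₁).comp (LinearMap.fst (ZMod 2) _ _) +
       (LinearMap.mulRight (ZMod 2) (v * g₂)).comp (LinearMap.snd (ZMod 2) _ _))))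

/-- The two-generator quasi-cyclic code
`C(g₁,g₂,v) = { ([a·v·g₁ + b·g₂ mod xⁿ−1], [a·g₁ + b·v·g₂ mod xⁿ−1]) : a, b ∈ F₂[x] } ⊆ F₂^{2n}`,
where `F₂^{2n}` is identified with `F₂ⁿ × F₂ⁿ`. -/
noncomputable def QCCode (n : ℕ) (g₁ g₂ v : Polynomial (ZMod 2)) :
    Submodule (ZMod 2) ((Fin n → ZMod 2) × (Fin n → ZMod 2)) :=
  LinearMap.range (cwL n g₁ g₂ v)

/-- Euclidean inner product on `F₂ⁿ`. -/
def einner (n : ℕ) (u w : Fin n → ZMod 2) : ZMod 2 := ∑ i, u i * w i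

/-- Symplectic inner product `⟨u,w⟩ₛ = Σᵢ (uᵢ w_{n+i} − u_{n+i} wᵢ)` on `F₂ⁿ × F₂ⁿ ≅ F₂^{2n}`. -/
def sinner (n : ℕ) (u w : (Fin n → ZMod 2) × (Fin n → ZMod 2)) : ZMod 2 :=
  ∑ i, (u.1 i * w.2 i - u.2 i * w.1 i)

/-- Symplectic dual `C^⊥ₛ = {w : ⟨u,w⟩ₛ = 0 for all u ∈ C}` of a linear code `C ⊆ F₂^{2n}`. -/
noncomputable def sympDual (n : ℕ)
    (C : Submodule (ZMod 2) ((Fin n → ZMod 2) × (Fin n → ZMod 2))) :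
    Submodule (ZMod 2) ((Fin n → ZMod 2) × (Fin n → ZMod 2)) where
  carrier := {w | ∀ u ∈ C, sinner n u w = 0}
  zero_mem' := by intro u _; simp [sinner]
  add_mem' := by
    intro w w' hw hw' u hu
    have h : sinner n u (w + w') = sinner n u w + sinner n u w' := by
      simp only [sinner, Prod.fst_add, Prod.snd_add, Pi.add_apply]
      rw [← Finset.sum_add_distrib]
      exact Finset.sum_congr rfl fun i _ => by ring
    rw [h, hw u hu, hw' u hu, add_zero]
  smul_mem' := by
    intro c w hw u hu
    have h : sinner n u (c • w) = c * sinner n u w := by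
      simp only [sinner, Prod.smul_fst, Prod.smul_snd, Pi.smul_apply, smul_eq_mul,
        Finset.mul_sum]
      exact Finset.sum_congr rfl fun i _ => by ring
    rw [h, hw u hu, mul_zero]

/-- Symplectic weight `wₛ(u) = #{i : (uᵢ, u_{n+i}) ≠ (0,0)}` on `F₂ⁿ × F₂ⁿ ≅ F₂^{2n}`. -/
def sympWt (n : ℕ) (u : (Fin n → ZMod 2) × (Fin n → ZMod 2)) : ℕ :=
  (Finset.univ.filter fun i : Fin n => (u.1 i, u.2 i) ≠ ((0 : ZMod 2), (0 : ZMod 2))).card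

/-- For `f` of degree `< n`, the polynomial `f̄ = f₀ + f_{n−1}x + f_{n−2}x² + ⋯ + f₁x^{n−1}`. -/
noncomputable def barPoly (n : ℕ) (f : Polynomial (ZMod 2)) : Polynomial (ZMod 2) :=
  ∑ i ∈ Finset.range n, Polynomial.C (f.coeff (if i = 0 then 0 else n - i)) * Polynomial.X ^ i

/-- The linear map `(c, d) ↦ ([c·G₁ + d·V·G₂ mod xⁿ−1], [c·V·G₁ + d·G₂ mod xⁿ−1])`;
with `G₁ = g₁^⊥`, `G₂ = g₂^⊥` and `V = v̄` its range is the claimed symplectic dual code. -/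
noncomputable def dualCwL (n : ℕ) (G₁ G₂ V : Polynomial (ZMod 2)) :
    (Polynomial (ZMod 2) × Polynomial (ZMod 2)) →ₗ[ZMod 2]
      ((Fin n → ZMod 2) × (Fin n → ZMod 2)) :=
  LinearMap.prod
    ((vecL n).comp ((Polynomial.modByMonicHom (X ^ n - 1)).comp
      ((LinearMap.mulRight (ZMod 2) G₁).comp (LinearMap.fst (ZMod 2) _ _) +
       (LinearMap.mulRight (ZMod 2) (V * G₂)).comp (LinearMap.snd (ZMod 2) _ _))))
    ((vecL n).comp ((Polynomial.modByMonicHom (X ^ n - 1)).comp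
      ((LinearMap.mulRight (ZMod 2) (V * G₁)).comp (LinearMap.fst (ZMod 2) _ _) +
       (LinearMap.mulRight (ZMod 2) G₂).comp (LinearMap.snd (ZMod 2) _ _))))

/-! Write `σ = expand (n - 1)`, the substitution `x ↦ x⁻¹` modulo `xⁿ - 1`. The Euclidean product
of the coefficient vectors of `p` and `q` is the constant term of `p · σ q` modulo `xⁿ - 1`, and this
pairing is nondegenerate. Hence `([c], [d])` is symplectically orthogonal to `C(g₁, g₂, v)` iff
`xⁿ - 1` divides `g₁ (v σd - σc)` and `g₂ (v σc - σd)`, i.e. `h₁ ∣ v σd - σc` and `h₂ ∣ v σc - σd`.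
Applying `σ`, and using `σ v ≡ v` (this is `v̄ = v`), `g₂ ∣ σ h₁` (from `g₂ ∣ h₁^rev`) and hence
`g₁ ∣ σ h₂`, gives `g₂ ∣ v d - c` and `g₁ ∣ v c - d`. Since `v² - 1 = (v - 1)²` is invertible
modulo `xⁿ - 1`, these two divisibilities characterise the code, and the same invertibility shows
that `(a, b)` gives the zero codeword iff `h₁ ∣ a` and `h₂ ∣ b`, so the code has dimension
`deg h₁ + deg h₂`. -/

theorem Nat.mod_eq_mod_iff_add_mul_sub_one_mod_eq_zero {n : ℕ} (hn : 0 < n) (i j : ℕ) :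
    i % n = j % n ↔ (i + j * (n - 1)) % n = 0 := by
  rw [← ZMod.natCast_eq_natCast_iff', ← Nat.dvd_iff_mod_eq_zero, ← ZMod.natCast_eq_zero_iff,
    Nat.cast_add, Nat.cast_mul, Nat.cast_sub (Nat.one_le_of_lt hn), ZMod.natCast_self,
    ← sub_eq_zero]
  ring_nf

namespace Polynomial

section XPowSubOne

variable {R : Type*} [CommRing R] {n : ℕ}

theorem monic_X_pow_sub_one (hn : 0 < n) : (X ^ n - 1 : R[X]).Monic := by
  simpa using monic_X_pow_sub_C (1 : R) hn.ne'

theorem degree_X_pow_sub_one [Nontrivial R] (hn : 0 < n) : (X ^ n - 1 : R[X]).degree = n := by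
  simpa using degree_X_pow_sub_C hn (1 : R)

theorem natDegree_X_pow_sub_one [Nontrivial R] : (X ^ n - 1 : R[X]).natDegree = n := by
  simpa using natDegree_X_pow_sub_C (n := n) (r := (1 : R))

theorem natDegree_add_natDegree_of_mul_eq_X_pow_sub_one [IsDomain R] (hn : 0 < n) {g h : R[X]}
    (he : g * h = X ^ n - 1) : g.natDegree + h.natDegree = n := by
  have hgh : g * h ≠ 0 := he ▸ (monic_X_pow_sub_one hn).ne_zero
  rw [← natDegree_mul (left_ne_zero_of_mul hgh) (right_ne_zero_of_mul hgh), he,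
    natDegree_X_pow_sub_one]

theorem X_pow_sub_one_dvd_X_pow_sub_X_pow {a b : ℕ} (h : a ≡ b [MOD n]) :
    (X ^ n - 1 : R[X]) ∣ X ^ a - X ^ b := by
  wlog hba : b ≤ a generalizing a b
  · exact dvd_sub_comm.1 (this h.symm (by omega))
  obtain ⟨k, hk⟩ := (Nat.modEq_iff_dvd' hba).1 h.symm
  rw [show a = b + n * k by omega, pow_add, ← mul_sub_one]
  exact (pow_one_sub_dvd_pow_mul_sub_one X n k).mul_left _

theorem X_pow_sub_one_dvd_expand {p : R[X]} (k : ℕ) (h : (X ^ n - 1 : R[X]) ∣ p) :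
    (X ^ n - 1 : R[X]) ∣ expand R k p := by
  obtain ⟨q, rfl⟩ := h
  have hM : (X ^ n - 1 : R[X]) ∣ expand R k (X ^ n - 1) := by
    simpa [← pow_mul, mul_comm k] using pow_one_sub_dvd_pow_mul_sub_one (X : R[X]) n k
  rw [map_mul]
  exact hM.mul_right _

theorem X_pow_sub_one_dvd_expand_sub_expand {a b : ℕ} (h : a ≡ b [MOD n]) (p : R[X]) :
    (X ^ n - 1 : R[X]) ∣ expand R a p - expand R b p := by
  have := sub_dvd_eval_sub (X ^ a) (X ^ b) (p.map C)
  rw [eval_map, eval_map] at this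
  exact (X_pow_sub_one_dvd_X_pow_sub_X_pow h).trans this

theorem X_pow_sub_one_dvd_expand_expand_sub (hn : 0 < n) (p : R[X]) :
    (X ^ n - 1 : R[X]) ∣ expand R (n - 1) (expand R (n - 1) p) - p := by
  have h : (n - 1) * (n - 1) ≡ 1 [MOD n] := by
    refine Nat.modEq_iff_dvd.2 ⟨2 - n, ?_⟩
    push_cast [Nat.cast_sub (Nat.one_le_of_lt hn)]
    ring
  simpa [expand_expand] using X_pow_sub_one_dvd_expand_sub_expand h p

theorem X_pow_sub_one_dvd_X_pow_mul_reflect_sub_expand (hn : 0 < n) {N : ℕ} {f : R[X]}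
    (hf : f.natDegree ≤ N) :
    (X ^ n - 1 : R[X]) ∣ X ^ ((n - 1) * N) * reflect N f - expand R (n - 1) f := by
  refine induction_with_natDegree_le
    (fun f => (X ^ n - 1 : R[X]) ∣ X ^ ((n - 1) * N) * reflect N f - expand R (n - 1) f)
    N (by simp) (fun m r _ hm => ?_) (fun f g _ _ hf hg => ?_) f hf
  · have hmod : (n - 1) * N + (N - m) ≡ (n - 1) * m [MOD n] := by
      refine Nat.modEq_iff_dvd.2 ⟨m - N, ?_⟩
      push_cast [Nat.cast_sub (Nat.one_le_of_lt hn), Nat.cast_sub hm]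
      ring
    rw [reflect_C_mul_X_pow, revAt_le hm, map_mul, expand_C, map_pow, expand_X, ← pow_mul,
      show X ^ ((n - 1) * N) * (C r * X ^ (N - m)) - C r * X ^ ((n - 1) * m)
        = C r * (X ^ ((n - 1) * N + (N - m)) - X ^ ((n - 1) * m)) by ring]
    exact (X_pow_sub_one_dvd_X_pow_sub_X_pow hmod).mul_left _
  · rw [reflect_add, map_add]
    convert dvd_add hf hg using 1
    ring

theorem modByMonic_X_pow_sub_one_monomial [Nontrivial R] (hn : 0 < n) (i : ℕ) (a : R) :
    monomial i a %ₘ (X ^ n - 1) = monomial (i % n) a := by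
  have hdvd : (X ^ n - 1 : R[X]) ∣ monomial i a - monomial (i % n) a := by
    rw [← C_mul_X_pow_eq_monomial, ← C_mul_X_pow_eq_monomial, ← mul_sub]
    exact (X_pow_sub_one_dvd_X_pow_sub_X_pow (Nat.mod_modEq i n).symm).mul_left _
  rw [modByMonic_eq_of_dvd_sub (monic_X_pow_sub_one hn) hdvd,
    modByMonic_eq_self_iff (monic_X_pow_sub_one hn), degree_X_pow_sub_one hn]
  exact (degree_monomial_le _ _).trans_lt (by exact_mod_cast Nat.mod_lt i hn)

theorem dvd_expand_of_dvd_reverse (hn : 0 < n) {g p : R[X]} (hg : g ∣ X ^ n - 1)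
    (h : g ∣ p.reverse) : g ∣ expand R (n - 1) p := by
  have hrev : (X ^ n - 1 : R[X]) ∣ X ^ ((n - 1) * p.natDegree) * p.reverse - expand R (n - 1) p :=
    X_pow_sub_one_dvd_X_pow_mul_reflect_sub_expand hn le_rfl
  simpa using (h.mul_left (X ^ ((n - 1) * p.natDegree))).sub (hg.trans hrev)

variable [IsDomain R]

theorem dvd_expand_of_dvd_expand (hn : 0 < n) {g₁ h₁ g₂ h₂ : R[X]}
    (he₁ : g₁ * h₁ = X ^ n - 1) (he₂ : g₂ * h₂ = X ^ n - 1) (h : g₂ ∣ expand R (n - 1) h₁) :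
    g₁ ∣ expand R (n - 1) h₂ := by
  have hh₁ : h₁ ≠ 0 := right_ne_zero_of_mul (he₁ ▸ (monic_X_pow_sub_one hn).ne_zero)
  have h₂₁ : (X ^ n - 1 : R[X]) ∣ h₂ * expand R (n - 1) h₁ := by
    rw [← he₂, mul_comm g₂]
    exact mul_dvd_mul_left h₂ h
  have h₁₂ : (X ^ n - 1 : R[X]) ∣ expand R (n - 1) h₂ * h₁ := by
    have := X_pow_sub_one_dvd_expand (n - 1) h₂₁
    rw [map_mul] at this
    convert this.sub ((X_pow_sub_one_dvd_expand_expand_sub hn h₁).mul_left (expand R (n - 1) h₂))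
      using 1
    ring
  rw [← he₁] at h₁₂
  exact (mul_dvd_mul_iff_right hh₁).1 h₁₂

theorem dvd_sub_of_dvd_mul_expand (hn : 0 < n) {g h g' v c d : R[X]} (hgh : g * h = X ^ n - 1)
    (hg' : g' ∣ expand R (n - 1) h) (hg'M : g' ∣ X ^ n - 1)
    (hv : (X ^ n - 1 : R[X]) ∣ expand R (n - 1) v - v)
    (H : (X ^ n - 1 : R[X]) ∣ g * (v * expand R (n - 1) d - expand R (n - 1) c)) :
    g' ∣ v * d - c := by
  have hg : g ≠ 0 := left_ne_zero_of_mul (hgh ▸ (monic_X_pow_sub_one hn).ne_zero)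
  obtain ⟨k, hk⟩ : h ∣ v * expand R (n - 1) d - expand R (n - 1) c :=
    (mul_dvd_mul_iff_left hg).1 (hgh ▸ H)
  set σ := expand R (n - 1)
  have hσ : g' ∣ σ v * σ (σ d) - σ (σ c) := by
    have := congrArg σ hk
    rw [map_sub, map_mul, map_mul] at this
    rw [this]
    exact hg'.mul_right _
  have hcong : (X ^ n - 1 : R[X]) ∣ (v * d - c) - (σ v * σ (σ d) - σ (σ c)) := by
    convert (((dvd_sub_comm.1 hv).mul_right d).sub
      ((X_pow_sub_one_dvd_expand_expand_sub hn d).mul_left (σ v))).add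
      (X_pow_sub_one_dvd_expand_expand_sub hn c) using 1
    ring
  simpa using (hg'M.trans hcong).add hσ

end XPowSubOne

theorem finrank_range_eq_natDegree_add_natDegree {K V : Type*} [Field K] [AddCommGroup V]
    [Module K V] (f : K[X] × K[X] →ₗ[K] V) {h₁ h₂ : K[X]} (hh₁ : h₁ ≠ 0) (hh₂ : h₂ ≠ 0)
    (hf : ∀ a b, f (a, b) = 0 ↔ h₁ ∣ a ∧ h₂ ∣ b) :
    Module.finrank K (LinearMap.range f) = h₁.natDegree + h₂.natDegree := by
  have hmod : ∀ {h : K[X]}, h ≠ 0 → ∀ a, a % h ∈ degreeLT K h.natDegree := fun hh a =>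
    mem_degreeLT.2 (degree_eq_natDegree hh ▸ degree_mod_lt a hh)
  let g := f ∘ₗ (degreeLT K h₁.natDegree).subtype.prodMap (degreeLT K h₂.natDegree).subtype
  have hrange : LinearMap.range g = LinearMap.range f := by
    refine le_antisymm (LinearMap.range_comp_le_range _ _) ?_
    rintro _ ⟨⟨a, b⟩, rfl⟩
    refine ⟨(⟨a % h₁, hmod hh₁ a⟩, ⟨b % h₂, hmod hh₂ b⟩), ?_⟩
    show f (a % h₁, b % h₂) = f (a, b)
    rw [← sub_eq_zero, ← map_sub, Prod.mk_sub_mk, hf, EuclideanDomain.mod_eq_sub_mul_div,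
      EuclideanDomain.mod_eq_sub_mul_div b]
    exact ⟨⟨-(a / h₁), by ring⟩, ⟨-(b / h₂), by ring⟩⟩
  have hinj : Function.Injective g := by
    rw [← LinearMap.ker_eq_bot, LinearMap.ker_eq_bot']
    rintro ⟨⟨a, ha⟩, ⟨b, hb⟩⟩ hab
    obtain ⟨ha', hb'⟩ := (hf a b).1 hab
    have ha0 := eq_zero_of_dvd_of_degree_lt ha' (degree_eq_natDegree hh₁ ▸ mem_degreeLT.1 ha)
    have hb0 := eq_zero_of_dvd_of_degree_lt hb' (degree_eq_natDegree hh₂ ▸ mem_degreeLT.1 hb)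
    subst ha0 hb0
    rfl
  rw [← hrange, LinearMap.finrank_range_of_inj hinj, Module.finrank_prod,
    (degreeLTEquiv K _).finrank_eq, (degreeLTEquiv K _).finrank_eq, Module.finrank_fin_fun,
    Module.finrank_fin_fun]

end Polynomial

section CoefficientVector

variable {n : ℕ}

theorem barPoly_eq_reflect {f : (ZMod 2)[X]} (hf : f.natDegree < n) :
    barPoly n f = reflect n f - C (f.coeff 0) * (X ^ n - 1) := by
  ext k
  simp only [barPoly, finsetSum_coeff, coeff_C_mul, coeff_X_pow, mul_ite, mul_one, mul_zero,
    Finset.sum_ite_eq, Finset.mem_range, coeff_sub, coeff_reflect, coeff_one]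
  rcases lt_or_ge k n with hk | hk
  · rw [if_pos hk, revAt_le hk.le, if_neg hk.ne]
    rcases Nat.eq_zero_or_pos k with rfl | hk0
    · simp [coeff_eq_zero_of_natDegree_lt hf]
    · simp [hk0.ne']
  · rw [if_neg (not_lt.2 hk)]
    rcases hk.eq_or_lt with rfl | hk'
    · simp [(Nat.zero_le _).trans_lt hf |>.ne']
    · rw [← revAtFun_eq, revAtFun, if_neg (not_le.2 hk'), coeff_eq_zero_of_natDegree_lt (hf.trans hk')]
      simp [hk'.ne', ((Nat.zero_le _).trans_lt hk').ne']

theorem X_pow_sub_one_dvd_barPoly_sub_expand (hn : 0 < n) {f : (ZMod 2)[X]}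
    (hf : f.natDegree < n) : (X ^ n - 1) ∣ barPoly n f - expand (ZMod 2) (n - 1) f := by
  have h := X_pow_sub_one_dvd_X_pow_mul_reflect_sub_expand hn hf.le
  have h' : (X ^ n - 1 : (ZMod 2)[X]) ∣ X ^ ((n - 1) * n) - 1 := by
    rw [mul_comm]; exact pow_one_sub_dvd_pow_mul_sub_one X n (n - 1)
  rw [barPoly_eq_reflect hf]
  convert (h.sub (h'.mul_right (reflect n f))).sub (dvd_mul_left _ (C (f.coeff 0))) using 1
  ring

theorem vecL_apply (p : (ZMod 2)[X]) (i : Fin n) : vecL n p i = p.coeff i := rfl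

theorem einner_eq_dotProduct (u w : Fin n → ZMod 2) : einner n u w = u ⬝ᵥ w := rfl

theorem vecL_monomial {k : ℕ} (hk : k < n) (a : ZMod 2) :
    vecL n (monomial k a) = Pi.single ⟨k, hk⟩ a := by
  ext i
  simp [vecL_apply, coeff_monomial, Pi.single_apply, Fin.ext_iff, eq_comm]

theorem vecL_modByMonic_eq_zero_iff (hn : 0 < n) {p : (ZMod 2)[X]} :
    vecL n (p %ₘ (X ^ n - 1)) = 0 ↔ (X ^ n - 1) ∣ p := by
  rw [← modByMonic_eq_zero_iff_dvd (monic_X_pow_sub_one hn)]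
  refine ⟨fun h => ext fun k => ?_, fun h => by rw [h, map_zero]⟩
  rw [coeff_zero]
  by_cases hk : k < n
  · exact congrFun h ⟨k, hk⟩
  · apply coeff_eq_zero_of_degree_lt
    refine (degree_modByMonic_lt p (monic_X_pow_sub_one hn)).trans_le ?_
    rw [degree_X_pow_sub_one hn]
    exact_mod_cast not_lt.1 hk

theorem exists_vecL_modByMonic_eq (hn : 0 < n) (w : Fin n → ZMod 2) :
    ∃ p : (ZMod 2)[X], vecL n (p %ₘ (X ^ n - 1)) = w := by
  set p := (degreeLTEquiv (ZMod 2) n).symm w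
  refine ⟨p, ?_⟩
  rw [(modByMonic_eq_self_iff (monic_X_pow_sub_one hn)).2
    (by rw [degree_X_pow_sub_one hn]; exact mem_degreeLT.1 p.2)]
  exact (degreeLTEquiv (ZMod 2) n).apply_symm_apply w

theorem einner_vecL_modByMonic (hn : 0 < n) (p q : (ZMod 2)[X]) :
    einner n (vecL n (p %ₘ (X ^ n - 1))) (vecL n (q %ₘ (X ^ n - 1))) =
      ((p * expand (ZMod 2) (n - 1) q) %ₘ (X ^ n - 1)).coeff 0 := by
  simp only [einner_eq_dotProduct]
  induction p using Polynomial.induction_on' with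
  | add p p' hp hp' => rw [add_modByMonic, map_add, add_dotProduct, hp, hp', add_mul,
      add_modByMonic, coeff_add]
  | monomial i a =>
    induction q using Polynomial.induction_on' with
    | add q q' hq hq' => rw [add_modByMonic, map_add, dotProduct_add, hq, hq', map_add, mul_add,
        add_modByMonic, coeff_add]
    | monomial j b =>
      rw [modByMonic_X_pow_sub_one_monomial hn, modByMonic_X_pow_sub_one_monomial hn,
        expand_monomial, monomial_mul_monomial, modByMonic_X_pow_sub_one_monomial hn,
        coeff_monomial, vecL_monomial (Nat.mod_lt _ hn), vecL_monomial (Nat.mod_lt _ hn),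
        single_dotProduct, Pi.single_apply]
      simp only [Fin.mk.injEq, Nat.mod_eq_mod_iff_add_mul_sub_one_mod_eq_zero hn]
      split_ifs <;> simp

theorem X_pow_sub_one_dvd_of_forall_coeff_modByMonic_mul_eq_zero (hn : 0 < n)
    {f : (ZMod 2)[X]} (h : ∀ a, ((a * f) %ₘ (X ^ n - 1)).coeff 0 = 0) : (X ^ n - 1) ∣ f := by
  -- pairing `[a]` with `[σ f]` gives the constant term of `a · σ (σ f) ≡ a · f`
  have hσ : vecL n (expand (ZMod 2) (n - 1) f %ₘ (X ^ n - 1)) = 0 := by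
    refine dotProduct_eq_zero_iff.1 fun w => ?_
    obtain ⟨a, rfl⟩ := exists_vecL_modByMonic_eq hn w
    have hinv : (X ^ n - 1 : (ZMod 2)[X]) ∣ a * expand _ (n - 1) (expand _ (n - 1) f) - a * f := by
      rw [← mul_sub]
      exact (X_pow_sub_one_dvd_expand_expand_sub hn f).mul_left a
    rw [dotProduct_comm, ← einner_eq_dotProduct, einner_vecL_modByMonic hn,
      modByMonic_eq_of_dvd_sub (monic_X_pow_sub_one hn) hinv, h]
  have hσσ := X_pow_sub_one_dvd_expand (n - 1) ((vecL_modByMonic_eq_zero_iff hn).1 hσ)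
  simpa using dvd_sub hσσ (X_pow_sub_one_dvd_expand_expand_sub hn f)

end CoefficientVector

section QuasiCyclicCode

variable {n : ℕ} {g₁ g₂ v : (ZMod 2)[X]}

theorem cwL_apply (a b : (ZMod 2)[X]) :
    cwL n g₁ g₂ v (a, b) =
      (vecL n ((a * (v * g₁) + b * g₂) %ₘ (X ^ n - 1)),
        vecL n ((a * g₁ + b * (v * g₂)) %ₘ (X ^ n - 1))) := rfl

theorem sinner_eq_einner_sub_einner (u w : (Fin n → ZMod 2) × (Fin n → ZMod 2)) :
    sinner n u w = einner n u.1 w.2 - einner n u.2 w.1 :=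
  Finset.sum_sub_distrib ..

theorem sinner_cwL_vecL_modByMonic (hn : 0 < n) (a b c d : (ZMod 2)[X]) :
    sinner n (cwL n g₁ g₂ v (a, b)) (vecL n (c %ₘ (X ^ n - 1)), vecL n (d %ₘ (X ^ n - 1))) =
      ((a * g₁ * (v * expand _ (n - 1) d - expand _ (n - 1) c) -
        b * g₂ * (v * expand _ (n - 1) c - expand _ (n - 1) d)) %ₘ (X ^ n - 1)).coeff 0 := by
  rw [sinner_eq_einner_sub_einner, cwL_apply, einner_vecL_modByMonic hn,
    einner_vecL_modByMonic hn, ← coeff_sub, ← sub_modByMonic]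
  ring_nf

theorem dvd_of_mem_sympDual (hn : 0 < n) {c d : (ZMod 2)[X]}
    (hw : (vecL n (c %ₘ (X ^ n - 1)), vecL n (d %ₘ (X ^ n - 1))) ∈
      sympDual n (QCCode n g₁ g₂ v)) :
    (X ^ n - 1) ∣ g₁ * (v * expand _ (n - 1) d - expand _ (n - 1) c) ∧
      (X ^ n - 1) ∣ g₂ * (v * expand _ (n - 1) c - expand _ (n - 1) d) := by
  constructor <;> refine X_pow_sub_one_dvd_of_forall_coeff_modByMonic_mul_eq_zero hn fun a => ?_
  · have h := hw _ ⟨(a, 0), rfl⟩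
    rw [sinner_cwL_vecL_modByMonic hn] at h
    convert h using 3
    ring
  · have h := hw _ ⟨(0, -a), rfl⟩
    rw [sinner_cwL_vecL_modByMonic hn] at h
    convert h using 3
    ring

theorem cwL_eq_zero_iff (hn : 0 < n) {h₁ h₂ : (ZMod 2)[X]} (he₁ : g₁ * h₁ = X ^ n - 1)
    (he₂ : g₂ * h₂ = X ^ n - 1) (hv : IsCoprime (v ^ 2 - 1) (X ^ n - 1)) {a b : (ZMod 2)[X]} :
    cwL n g₁ g₂ v (a, b) = 0 ↔ h₁ ∣ a ∧ h₂ ∣ b := by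
  have hg₁ : g₁ ≠ 0 := left_ne_zero_of_mul (he₁ ▸ (monic_X_pow_sub_one hn).ne_zero)
  have hg₂ : g₂ ≠ 0 := left_ne_zero_of_mul (he₂ ▸ (monic_X_pow_sub_one hn).ne_zero)
  rw [cwL_apply, Prod.mk_eq_zero, vecL_modByMonic_eq_zero_iff hn, vecL_modByMonic_eq_zero_iff hn]
  constructor
  · rintro ⟨hA, hB⟩
    have ha : (X ^ n - 1 : (ZMod 2)[X]) ∣ (v ^ 2 - 1) * (g₁ * a) := by
      convert (hA.mul_left v).sub hB using 1
      ring
    have hb : (X ^ n - 1 : (ZMod 2)[X]) ∣ (v ^ 2 - 1) * (g₂ * b) := by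
      convert (hB.mul_left v).sub hA using 1
      ring
    have ha' := hv.symm.dvd_of_dvd_mul_left ha
    have hb' := hv.symm.dvd_of_dvd_mul_left hb
    rw [← he₁] at ha'
    rw [← he₂] at hb'
    exact ⟨(mul_dvd_mul_iff_left hg₁).1 ha', (mul_dvd_mul_iff_left hg₂).1 hb'⟩
  · rintro ⟨⟨a, rfl⟩, ⟨b, rfl⟩⟩
    exact ⟨⟨v * a + b, by linear_combination (v * a) * he₁ + b * he₂⟩,
      ⟨a + v * b, by linear_combination a * he₁ + (v * b) * he₂⟩⟩

theorem mem_QCCode_of_dvd (hn : 0 < n) (hv : IsCoprime (v ^ 2 - 1) (X ^ n - 1))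
    {c d : (ZMod 2)[X]} (hc : g₁ ∣ v * c - d) (hd : g₂ ∣ v * d - c) :
    (vecL n (c %ₘ (X ^ n - 1)), vecL n (d %ₘ (X ^ n - 1))) ∈ QCCode n g₁ g₂ v := by
  obtain ⟨e, he⟩ := hc
  obtain ⟨f, hf⟩ := hd
  obtain ⟨s, t, hst⟩ := hv
  refine ⟨(s * e, s * f), ?_⟩
  have h₁ : (X ^ n - 1 : (ZMod 2)[X]) ∣ s * e * (v * g₁) + s * f * g₂ - c :=
    ⟨-(t * c), by linear_combination (-(s * v)) * he - s * hf + c * hst⟩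
  have h₂ : (X ^ n - 1 : (ZMod 2)[X]) ∣ s * e * g₁ + s * f * (v * g₂) - d :=
    ⟨-(t * d), by linear_combination (-s) * he - (s * v) * hf + d * hst⟩
  rw [cwL_apply, modByMonic_eq_of_dvd_sub (monic_X_pow_sub_one hn) h₁,
    modByMonic_eq_of_dvd_sub (monic_X_pow_sub_one hn) h₂]

end QuasiCyclicCode

theorem stmt_8_general (n : ℕ) (hn : 0 < n) (g₁ g₂ v h₁ h₂ : Polynomial (ZMod 2))
    (hdegv : v.natDegree < n)
    (he₁ : g₁ * h₁ = X ^ n - 1) (he₂ : g₂ * h₂ = X ^ n - 1)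
    (hvcop : IsCoprime (v - 1) (X ^ n - 1))
    (hdvd : g₂ ∣ h₁.reverse) (hbar : barPoly n v = v) :
    sympDual n (QCCode n g₁ g₂ v) ≤ QCCode n g₁ g₂ v ∧
    Module.finrank (ZMod 2) ↥(QCCode n g₁ g₂ v) =
      2 * n - g₁.natDegree - g₂.natDegree ∧
    n ≤ Module.finrank (ZMod 2) ↥(QCCode n g₁ g₂ v) := by
  have hM : (X ^ n - 1 : (ZMod 2)[X]) ≠ 0 := (monic_X_pow_sub_one hn).ne_zero
  have hh₁ : h₁ ≠ 0 := right_ne_zero_of_mul (he₁ ▸ hM)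
  have hh₂ : h₂ ≠ 0 := right_ne_zero_of_mul (he₂ ▸ hM)
  have hv : IsCoprime (v ^ 2 - 1) (X ^ n - 1) := by
    simpa [sub_pow_char] using hvcop.pow_left (m := 2)
  have hσv : (X ^ n - 1 : (ZMod 2)[X]) ∣ expand _ (n - 1) v - v := by
    simpa [hbar] using dvd_sub_comm.1 (X_pow_sub_one_dvd_barPoly_sub_expand hn hdegv)
  have hσ₁ : g₂ ∣ expand _ (n - 1) h₁ := dvd_expand_of_dvd_reverse hn ⟨h₂, he₂.symm⟩ hdvd
  have hσ₂ : g₁ ∣ expand _ (n - 1) h₂ := dvd_expand_of_dvd_expand hn he₁ he₂ hσ₁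
  have hdim : Module.finrank (ZMod 2) (QCCode n g₁ g₂ v) = h₁.natDegree + h₂.natDegree :=
    finrank_range_eq_natDegree_add_natDegree _ hh₁ hh₂ fun _ _ => cwL_eq_zero_iff hn he₁ he₂ hv
  have hdeg₁ := natDegree_add_natDegree_of_mul_eq_X_pow_sub_one hn he₁
  have hdeg₂ := natDegree_add_natDegree_of_mul_eq_X_pow_sub_one hn he₂
  have hg₂h₁ : g₂.natDegree ≤ h₁.natDegree :=
    (natDegree_le_of_dvd hdvd (mt reverse_eq_zero.1 hh₁)).trans h₁.reverse_natDegree_le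
  refine ⟨fun w hw => ?_, by omega, by omega⟩
  obtain ⟨c, hc⟩ := exists_vecL_modByMonic_eq hn w.1
  obtain ⟨d, hd⟩ := exists_vecL_modByMonic_eq hn w.2
  rw [← Prod.mk.eta (p := w), ← hc, ← hd] at hw ⊢
  obtain ⟨H₁, H₂⟩ := dvd_of_mem_sympDual hn hw
  exact mem_QCCode_of_dvd hn hv (dvd_sub_of_dvd_mul_expand hn he₂ hσ₂ ⟨h₁, he₁.symm⟩ hσv H₂)
    (dvd_sub_of_dvd_mul_expand hn he₁ hσ₁ ⟨h₂, he₂.symm⟩ hσv H₁)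

/-- under the symplectic dual-containing conditions, `C(g₁,g₂,v)` contains its
symplectic dual, has `F₂`-dimension `2n − deg g₁ − deg g₂`, and this dimension is `≥ n`. -/
theorem stmt_8 (n : ℕ) (hn : 0 < n) (g₁ g₂ v h₁ h₂ : Polynomial (ZMod 2))
    (hdeg₁ : g₁.natDegree < n) (hdeg₂ : g₂.natDegree < n) (hdegv : v.natDegree < n)
    (he₁ : g₁ * h₁ = X ^ n - 1) (he₂ : g₂ * h₂ = X ^ n - 1)
    (hcop : IsCoprime g₁ g₂) (hvcop : IsCoprime (v - 1) (X ^ n - 1))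
    (hdvd : g₂ ∣ h₁.reverse) (hbar : barPoly n v = v) :
    sympDual n (QCCode n g₁ g₂ v) ≤ QCCode n g₁ g₂ v ∧
    Module.finrank (ZMod 2) ↥(QCCode n g₁ g₂ v) =
      2 * n - g₁.natDegree - g₂.natDegree ∧
    n ≤ Module.finrank (ZMod 2) ↥(QCCode n g₁ g₂ v) :=
  stmt_8_general n hn g₁ g₂ v h₁ h₂ hdegv he₁ he₂ hvcop hdvd hbar
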